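/- Let n be even, let R be a natural number with n ≥ 4R + 2, and let U be a unitary 2^n × 2^n complex matrix indexed by bit strings x : ZMod n → Bool such that: (i) U commutes with the global bit-flip matrix X^{⊗n}; and (ii) for all j, k ∈ ZMod n with cyclic distance dist(j,k) > R, the matrix Uᴴ Z_j U commutes with both Z_k and X_k. Let H_n be the diagonal matrix whose (x,x)-entry is the number of p ∈ ZMod n with x p ≠ x (p+1) (i.e., H_n = (1/2)Σ_{p∈ZMod n}(I − Z_p Z_{p+1})). Then the expectation value ⟨U|+^n⟩, H_n U|+^n⟩⟩ is a real number that is at most n·(2R + 1/2)/(2R + 1). -/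

import Mathlib

/-!
Write `A_j = Uᴴ Z_j U` and `k = j + 2R + 1`, and let `F` flip the bits in the ball `S` of radius
`R` around `j`. As `U` has range `R` and the balls around `j` and `k` are disjoint, `F` commutes
with `A_k`; and `F = X^{⊗n} G`, where `G` flips `Sᶜ` and commutes with `A_j`, while `X^{⊗n}`
negates `A_j` by the `Z₂`-symmetry. So conjugation by `F` negates `A_j A_k`, and since `|+^n⟩` is
fixed by every bit flip, `⟨Z_j Z_k⟩ = ⟨+^n| A_j A_k |+^n⟩ = 0`: in the Born distribution of
`U|+^n⟩` the bits `j` and `k` agree with probability `1/2`. When they agree, the odd window of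
`2R + 1` edges from `j` to `k` contains an agreeing edge. The `n` windows cover every edge
`2R + 1` times, so the expected number `n - E` of agreeing edges satisfies `(2R + 1)(n - E) ≥ n/2`.
-/

open Matrix

/-- The single-qubit Pauli-Z operator on qubit `j`: diagonal with entry `(-1)^{x_j}`. -/
noncomputable def ZopC {n : ℕ} [NeZero n] (j : ZMod n) :
    Matrix (ZMod n → Bool) (ZMod n → Bool) ℂ :=
  Matrix.diagonal (fun x => if x j then -1 else 1)

/-- The single-qubit Pauli-X operator on qubit `j`: the permutation matrix flipping bit `j`. -/
noncomputable def XopC {n : ℕ} [NeZero n] (j : ZMod n) :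
    Matrix (ZMod n → Bool) (ZMod n → Bool) ℂ :=
  Matrix.of (fun x y => if y = Function.update x j (! x j) then 1 else 0)

/-- The global bit-flip operator `X^{⊗n}`: the permutation matrix of bitwise negation. -/
noncomputable def XallC (n : ℕ) [NeZero n] : Matrix (ZMod n → Bool) (ZMod n → Bool) ℂ :=
  Matrix.of (fun x y => if y = (fun i => ! x i) then 1 else 0)

/-- The state `|+^n⟩`: all entries equal to `2^{-n/2}`. -/
noncomputable def plusC (n : ℕ) [NeZero n] : (ZMod n → Bool) → ℂ :=
  fun _ => ((1 / Real.sqrt (2 ^ n) : ℝ) : ℂ)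

/-- The ring-of-disagrees Hamiltonian `H_n = (1/2) ∑_p (I - Z_p Z_{p+1})`: the diagonal
matrix whose `(x,x)`-entry is the number of `p` with `x p ≠ x (p+1)`. -/
noncomputable def ringHam (n : ℕ) [NeZero n] : Matrix (ZMod n → Bool) (ZMod n → Bool) ℂ :=
  Matrix.diagonal
    (fun x => ((Finset.univ.filter (fun p : ZMod n => x p ≠ x (p + 1))).card : ℂ))

/-- The cyclic distance between two elements of `ZMod n`. -/
def cyclicDist {n : ℕ} [NeZero n] (j k : ZMod n) : ℕ :=
  min (j - k).val (n - (j - k).val)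

section LinearAlgebra

variable {α : Type*} [Fintype α]

theorem star_mulVec_dotProduct_mulVec {R : Type*} [CommSemiring R] [StarRing R]
    (U M : Matrix α α R) (v : α → R) :
    star (U *ᵥ v) ⬝ᵥ M *ᵥ (U *ᵥ v) = star v ⬝ᵥ (Uᴴ * M * U) *ᵥ v := by
  rw [star_mulVec, mulVec_mulVec, dotProduct_mulVec, vecMul_vecMul, dotProduct_mulVec,
    Matrix.mul_assoc]

theorem dotProduct_mulVec_eq_zero_of_conj_eq_neg {R : Type*} [Ring R] [IsAddTorsionFree R]
    {F B : Matrix α α R} {u v : α → R} (hu : u ᵥ* F = u) (hv : F *ᵥ v = v)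
    (hB : F * B * F = -B) : u ⬝ᵥ B *ᵥ v = 0 := by
  refine self_eq_neg.mp ?_
  conv_lhs => rw [← hu, ← hv, ← dotProduct_mulVec, mulVec_mulVec, mulVec_mulVec, hB]
  rw [neg_mulVec, dotProduct_neg]

variable [DecidableEq α]

theorem permMatrix_mul_diagonal_mul_permMatrix_inv {R : Type*} [Semiring R] (σ : Equiv.Perm α)
    (d : α → R) :
    σ.permMatrix R * diagonal d * σ⁻¹.permMatrix R = diagonal (d ∘ σ) := by
  rw [PEquiv.toMatrix_toPEquiv_mul, PEquiv.mul_toMatrix_toPEquiv, Equiv.Perm.inv_def,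
    Equiv.symm_symm, submatrix_submatrix]
  exact submatrix_diagonal_equiv d σ

theorem star_dotProduct_diagonal_ofReal_mulVec (d : α → ℝ) (ψ : α → ℂ) :
    star ψ ⬝ᵥ diagonal (fun x => (d x : ℂ)) *ᵥ ψ =
      ((∑ x, Complex.normSq (ψ x) * d x : ℝ) : ℂ) := by
  simp only [dotProduct, mulVec_diagonal, Pi.star_apply, Complex.star_def]
  push_cast
  refine Finset.sum_congr rfl fun x _ => ?_
  rw [← Complex.mul_conj]
  ring

theorem sum_normSq_mulVec_of_conjTranspose_mul_self {U : Matrix α α ℂ} (hU : Uᴴ * U = 1)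
    (v : α → ℂ) : ∑ x, Complex.normSq ((U *ᵥ v) x) = ∑ x, Complex.normSq (v x) := by
  have hnorm (w : α → ℂ) :
      star w ⬝ᵥ (1 : Matrix α α ℂ) *ᵥ w = ((∑ x, Complex.normSq (w x) : ℝ) : ℂ) := by
    simpa using star_dotProduct_diagonal_ofReal_mulVec 1 w
  have h := star_mulVec_dotProduct_mulVec U 1 v
  rw [Matrix.mul_one, hU, hnorm, hnorm] at h
  exact_mod_cast h

end LinearAlgebra

section Flips

variable {ι : Type*} [DecidableEq ι]

def flipBits (S : Finset ι) (x : ι → Bool) : ι → Bool :=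
  fun i => x i ^^ decide (i ∈ S)

@[simp]
theorem flipBits_empty (x : ι → Bool) : flipBits ∅ x = x := by
  funext i
  simp [flipBits]

theorem flipBits_flipBits (S T : Finset ι) (x : ι → Bool) :
    flipBits S (flipBits T x) = flipBits (symmDiff S T) x := by
  funext i
  by_cases hS : i ∈ S <;> by_cases hT : i ∈ T <;> simp [flipBits, Finset.mem_symmDiff, hS, hT]

theorem flipBits_involutive (S : Finset ι) : Function.Involutive (flipBits S) := fun x => by
  rw [flipBits_flipBits, symmDiff_self, Finset.bot_eq_empty, flipBits_empty]

def flipPerm (S : Finset ι) : Equiv.Perm (ι → Bool) :=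
  (flipBits_involutive S).toPerm

@[simp]
theorem flipPerm_apply (S : Finset ι) (x : ι → Bool) : flipPerm S x = flipBits S x := rfl

@[simp]
theorem flipPerm_empty : flipPerm (∅ : Finset ι) = 1 :=
  Equiv.ext flipBits_empty

theorem flipPerm_mul (S T : Finset ι) : flipPerm S * flipPerm T = flipPerm (symmDiff S T) :=
  Equiv.ext (flipBits_flipBits S T)

@[simp]
theorem flipPerm_inv (S : Finset ι) : (flipPerm S)⁻¹ = flipPerm S :=
  inv_eq_of_mul_eq_one_left <| Equiv.ext (flipBits_involutive S)

theorem flipPerm_insert {m : ι} {S : Finset ι} (hm : m ∉ S) :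
    flipPerm (insert m S) = flipPerm {m} * flipPerm S := by
  rw [flipPerm_mul, (Finset.disjoint_singleton_left.mpr hm).symmDiff_eq_sup, Finset.sup_eq_union,
    Finset.insert_eq]

variable [Fintype ι] {R : Type*} [Semiring R]

theorem commute_permMatrix_flipPerm {A : Matrix (ι → Bool) (ι → Bool) R} {S : Finset ι}
    (h : ∀ m ∈ S, Commute A ((flipPerm {m}).permMatrix R)) :
    Commute A ((flipPerm S).permMatrix R) := by
  induction S using Finset.induction_on with
  | empty => simp
  | insert m S hm ih =>
    rw [flipPerm_insert hm, Matrix.permMatrix_mul]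
    exact (ih fun k hk => h k (Finset.mem_insert_of_mem hk)).mul_right
      (h m (Finset.mem_insert_self m S))

theorem permMatrix_flipPerm_mul_self (S : Finset ι) :
    (flipPerm S).permMatrix R * (flipPerm S).permMatrix R = 1 := by
  rw [← Matrix.permMatrix_mul, flipPerm_mul, symmDiff_self, Finset.bot_eq_empty, flipPerm_empty,
    Matrix.permMatrix_one]

end Flips

section Pauli

variable {n : ℕ} [NeZero n]

theorem XopC_eq_permMatrix (j : ZMod n) : XopC j = (flipPerm {j}).permMatrix ℂ := by
  have h (x : ZMod n → Bool) : Function.update x j (!x j) = flipBits {j} x := by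
    funext i
    by_cases hi : i = j <;> simp [flipBits, Function.update, hi]
  ext x y
  simp [XopC, PEquiv.toMatrix_apply, h, eq_comm]

theorem XallC_eq_permMatrix : XallC n = (flipPerm Finset.univ).permMatrix ℂ := by
  have h (x : ZMod n → Bool) : flipBits Finset.univ x = fun i => !x i := by
    funext i
    simp [flipBits]
  ext x y
  simp [XallC, PEquiv.toMatrix_apply, h, eq_comm]

theorem XallC_mul_ZopC_mul_XallC (j : ZMod n) : XallC n * ZopC j * XallC n = -ZopC j := by
  rw [XallC_eq_permMatrix]
  nth_rw 2 [← flipPerm_inv]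
  rw [ZopC, permMatrix_mul_diagonal_mul_permMatrix_inv, diagonal_neg]
  congr 1
  funext x
  cases h : x j <;> simp [flipBits, h]

theorem ZopC_mul_ZopC (j k : ZMod n) :
    ZopC j * ZopC k = diagonal fun x => ((if x j = x k then 1 else -1 : ℝ) : ℂ) := by
  rw [ZopC, ZopC, diagonal_mul_diagonal]
  congr 1
  funext x
  cases x j <;> cases x k <;> simp

end Pauli

theorem lt_cyclicDist_add_of_cyclicDist_le {n R : ℕ} [NeZero n] (hnR : 4 * R + 2 ≤ n)
    {j m : ZMod n} (h : cyclicDist j m ≤ R) :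
    R < cyclicDist (j + ((2 * R + 1 : ℕ) : ZMod n)) m := by
  set a := (j - m).val with ha
  have hvlt : a < n := ZMod.val_lt _
  have hb : (j + ((2 * R + 1 : ℕ) : ZMod n) - m).val = (a + (2 * R + 1)) % n := by
    rw [add_sub_right_comm, ZMod.val_add, ZMod.val_natCast, ← ha,
      Nat.mod_eq_of_lt (show 2 * R + 1 < n by omega)]
  have hmin : min a (n - a) ≤ R := h
  rw [cyclicDist, hb]
  rcases le_or_gt a R with hc | hc
  · rw [Nat.mod_eq_of_lt (by omega)]
    apply lt_min <;> omega
  · rw [Nat.mod_eq_sub_mod (by omega), Nat.mod_eq_of_lt (by omega)]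
    apply lt_min <;> omega

theorem expectation_ZopC_mul_ZopC_eq_zero {n R : ℕ} [NeZero n]
    {U : Matrix (ZMod n → Bool) (ZMod n → Bool) ℂ} (hU : U * Uᴴ = 1)
    (hsym : U * XallC n = XallC n * U)
    (hX : ∀ j k : ZMod n, R < cyclicDist j k → Commute (Uᴴ * ZopC j * U) (XopC k))
    {j k : ZMod n} (hjk : ∀ m, cyclicDist j m ≤ R → R < cyclicDist k m) :
    star (U *ᵥ plusC n) ⬝ᵥ (ZopC j * ZopC k) *ᵥ (U *ᵥ plusC n) = 0 := by
  have hAjAk : Uᴴ * (ZopC j * ZopC k) * U = (Uᴴ * ZopC j * U) * (Uᴴ * ZopC k * U) := by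
    calc Uᴴ * (ZopC j * ZopC k) * U = Uᴴ * ZopC j * (U * Uᴴ) * ZopC k * U := by
          rw [hU]; noncomm_ring
      _ = _ := by noncomm_ring
  have hUX : Uᴴ * XallC n = XallC n * Uᴴ := by
    have hX : (XallC n)ᴴ = XallC n := by
      rw [XallC_eq_permMatrix, conjTranspose_permMatrix, flipPerm_inv]
    simpa [conjTranspose_mul, hX] using (congrArg conjTranspose hsym).symm
  have hXAj : XallC n * (Uᴴ * ZopC j * U) * XallC n = -(Uᴴ * ZopC j * U) := by
    calc XallC n * (Uᴴ * ZopC j * U) * XallC n = (XallC n * Uᴴ) * ZopC j * (U * XallC n) := by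
          noncomm_ring
      _ = Uᴴ * (XallC n * ZopC j * XallC n) * U := by rw [← hUX, hsym]; noncomm_ring
      _ = -(Uᴴ * ZopC j * U) := by rw [XallC_mul_ZopC_mul_XallC, Matrix.mul_neg, Matrix.neg_mul]
  let S := Finset.univ.filter fun m => cyclicDist j m ≤ R
  have hAjG : Commute (Uᴴ * ZopC j * U) ((flipPerm Sᶜ).permMatrix ℂ) :=
    commute_permMatrix_flipPerm fun m hm => by
      rw [← XopC_eq_permMatrix]
      exact hX j m (by simpa [S] using hm)
  have hAkF : Commute (Uᴴ * ZopC k * U) ((flipPerm S).permMatrix ℂ) :=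
    commute_permMatrix_flipPerm fun m hm => by
      rw [← XopC_eq_permMatrix]
      exact hX k m (hjk m (by simpa [S] using hm))
  have hXG : (flipPerm S).permMatrix ℂ = XallC n * (flipPerm Sᶜ).permMatrix ℂ := by
    rw [XallC_eq_permMatrix, ← permMatrix_mul, flipPerm_mul, ← Finset.top_eq_univ, symmDiff_top,
      hnot_eq_compl, compl_compl]
  have hGX : (flipPerm S).permMatrix ℂ = (flipPerm Sᶜ).permMatrix ℂ * XallC n := by
    rw [XallC_eq_permMatrix, ← permMatrix_mul, flipPerm_mul, ← Finset.top_eq_univ, top_symmDiff,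
      hnot_eq_compl, compl_compl]
  rw [star_mulVec_dotProduct_mulVec, hAjAk]
  refine dotProduct_mulVec_eq_zero_of_conj_eq_neg (vecMul_permMatrix (flipPerm S))
    (permMatrix_mulVec (flipPerm S)) ?_
  have hFF := permMatrix_flipPerm_mul_self (R := ℂ) S
  have hGG := permMatrix_flipPerm_mul_self (R := ℂ) Sᶜ
  set Aj := Uᴴ * ZopC j * U
  set Ak := Uᴴ * ZopC k * U
  set F := (flipPerm S).permMatrix ℂ
  set G := (flipPerm Sᶜ).permMatrix ℂ
  set X := XallC n
  clear_value Aj Ak F G X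
  have hFAj : F * Aj * F = -Aj := by
    calc F * Aj * F = X * G * Aj * (G * X) := by rw [← hXG, ← hGX]
      _ = X * Aj * (G * G) * X := by rw [mul_assoc _ G Aj, ← hAjG.eq]; noncomm_ring
      _ = -Aj := by rw [hGG, Matrix.mul_one, hXAj]
  have hFAk : F * Ak * F = Ak := by
    rw [← hAkF.eq, Matrix.mul_assoc, hFF, Matrix.mul_one]
  calc F * (Aj * Ak) * F = F * Aj * (F * F) * Ak * F := by rw [hFF]; noncomm_ring
    _ = (F * Aj * F) * (F * Ak * F) := by noncomm_ring
    _ = -(Aj * Ak) := by rw [hFAj, hFAk, Matrix.neg_mul]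

section Counting

open Finset

theorem exists_lt_eq_succ_of_odd {f : ℕ → Bool} {m : ℕ} (hm : Odd m) (h : f 0 = f m) :
    ∃ i < m, f i = f (i + 1) := by
  by_contra! hne
  have halternate : ∀ i ≤ m, f i = (f 0 ^^ decide (Odd i)) := by
    intro i hi
    induction i with
    | zero => simp
    | succ i ih =>
      rw [Bool.eq_not_of_ne (hne i (by omega)).symm, ih (by omega)]
      by_cases hi : Odd i <;> simp [hi, Nat.odd_add_one]
  have := halternate m le_rfl
  simp [hm, ← h] at this

variable {G : Type*} [AddCommGroup G] [Fintype G]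

theorem sum_sum_add_eq_card_nsmul_sum {ι M : Type*} [AddCommMonoid M] (s : Finset ι) (a : ι → G)
    (f : G → M) : ∑ j, ∑ i ∈ s, f (j + a i) = #s • ∑ j, f j := by
  rw [Finset.sum_comm, ← Finset.sum_const]
  exact Finset.sum_congr rfl fun i _ => Equiv.sum_comp (Equiv.addRight (a i)) f

theorem card_eq_add_nsmul_le_mul_card_eq_add [DecidableEq G] (x : G → Bool) (g : G) {m : ℕ}
    (hm : Odd m) : #{j | x j = x (j + m • g)} ≤ m * #{p | x p = x (p + g)} := by
  have hwindow (j : G) (hj : x j = x (j + m • g)) :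
      1 ≤ #{i ∈ range m | x (j + i • g) = x (j + i • g + g)} := by
    obtain ⟨i, hi, hxi⟩ := exists_lt_eq_succ_of_odd (f := fun i => x (j + i • g)) hm (by simpa)
    refine Finset.one_le_card.mpr ⟨i, Finset.mem_filter.mpr ⟨Finset.mem_range.mpr hi, ?_⟩⟩
    simpa [succ_nsmul, add_assoc] using hxi
  calc #{j | x j = x (j + m • g)}
      = ∑ j, if x j = x (j + m • g) then 1 else 0 := Finset.card_filter _ _
    _ ≤ ∑ j, #{i ∈ range m | x (j + i • g) = x (j + i • g + g)} := by
      refine Finset.sum_le_sum fun j _ => ?_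
      split_ifs with hj
      · exact hwindow j hj
      · exact Nat.zero_le _
    _ = ∑ j, ∑ i ∈ range m, if x (j + i • g) = x (j + i • g + g) then 1 else 0 := by
      simp only [Finset.card_filter]
    _ = m * #{p | x p = x (p + g)} := by
      rw [sum_sum_add_eq_card_nsmul_sum (range m) (fun i => i • g)
        (fun p => if x p = x (p + g) then 1 else 0), card_range, smul_eq_mul, Finset.card_filter]

theorem sum_mul_card_ne_add_le [DecidableEq G] (μ : (G → Bool) → ℝ) (hμ0 : ∀ x, 0 ≤ μ x)
    (hμ1 : ∑ x, μ x = 1) (g : G) {m : ℕ} (hm : Odd m)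
    (hcorr : ∀ j, ∑ x, μ x * (if x j = x (j + m • g) then 1 else -1) = 0) :
    ∑ x, μ x * #{p | x p ≠ x (p + g)} ≤ Fintype.card G * (m - 1 / 2) / m := by
  have hhalf (j : G) : ∑ x, μ x * (if x j = x (j + m • g) then 1 else 0) = 1 / 2 := by
    have h := hcorr j
    have hsplit (x : G → Bool) : μ x * (if x j = x (j + m • g) then 1 else -1)
        = 2 * (μ x * if x j = x (j + m • g) then 1 else 0) - μ x := by
      split_ifs <;> ring
    rw [Finset.sum_congr rfl fun x _ => hsplit x, Finset.sum_sub_distrib, ← Finset.mul_sum,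
      hμ1] at h
    linarith
  have hne : ∑ x, μ x * #{p | x p ≠ x (p + g)}
      = Fintype.card G - ∑ x, μ x * #{p | x p = x (p + g)} := by
    have hcard (x : G → Bool) :
        (#{p | x p ≠ x (p + g)} : ℝ) = Fintype.card G - #{p | x p = x (p + g)} := by
      rw [eq_sub_iff_add_eq, ← Nat.cast_add, add_comm, Finset.card_filter_add_card_filter_not,
        card_univ]
    simp only [hcard, mul_sub, Finset.sum_sub_distrib, ← Finset.sum_mul, hμ1, one_mul]
  have hbound : (Fintype.card G : ℝ) / 2 ≤ m * ∑ x, μ x * #{p | x p = x (p + g)} := by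
    calc (Fintype.card G : ℝ) / 2
        = ∑ j : G, ∑ x, μ x * (if x j = x (j + m • g) then 1 else 0) := by
          rw [Finset.sum_congr rfl fun j _ => hhalf j, Finset.sum_const, card_univ, nsmul_eq_mul]
          ring
      _ = ∑ x, μ x * #{j | x j = x (j + m • g)} := by
          rw [Finset.sum_comm]
          simp only [← Finset.mul_sum, Finset.card_filter, Nat.cast_sum, Nat.cast_ite, Nat.cast_one,
            Nat.cast_zero]
      _ ≤ ∑ x, μ x * (m * #{p | x p = x (p + g)} : ℕ) := by
          gcongr with x
          · exact hμ0 x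
          · exact card_eq_add_nsmul_le_mul_card_eq_add x g hm
      _ = m * ∑ x, μ x * #{p | x p = x (p + g)} := by
          rw [Finset.mul_sum]
          exact Finset.sum_congr rfl fun x _ => by push_cast; ring
  have hm0 : (0 : ℝ) < m := by exact_mod_cast hm.pos
  rw [le_div_iff₀ hm0, hne]
  linarith

end Counting

theorem sum_normSq_plusC (n : ℕ) [NeZero n] : ∑ x, Complex.normSq (plusC n x) = 1 := by
  simp only [plusC, Complex.normSq_ofReal, Finset.sum_const, Finset.card_univ, Fintype.card_fun,
    Fintype.card_bool, ZMod.card, nsmul_eq_mul]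
  rw [div_mul_div_comm, one_mul, Real.mul_self_sqrt (by positivity), Nat.cast_pow, Nat.cast_ofNat,
    mul_one_div_cancel (by positivity)]

theorem stmt3 (n R : ℕ) [NeZero n] (hnR : 4 * R + 2 ≤ n)
    (U : Matrix (ZMod n → Bool) (ZMod n → Bool) ℂ)
    (hU : Uᴴ * U = 1 ∧ U * Uᴴ = 1)
    (hsym : U * XallC n = XallC n * U)
    (hrange : ∀ j k : ZMod n, R < cyclicDist j k →
      Commute (Uᴴ * ZopC j * U) (ZopC k) ∧ Commute (Uᴴ * ZopC j * U) (XopC k)) :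
    (star (U.mulVec (plusC n)) ⬝ᵥ (ringHam n).mulVec (U.mulVec (plusC n))).im = 0 ∧
    (star (U.mulVec (plusC n)) ⬝ᵥ (ringHam n).mulVec (U.mulVec (plusC n))).re ≤
      (n : ℝ) * (2 * R + 1 / 2) / (2 * R + 1) := by
  set ψ := U *ᵥ plusC n
  have hnorm : ∑ x, Complex.normSq (ψ x) = 1 := by
    rw [sum_normSq_mulVec_of_conjTranspose_mul_self hU.1, sum_normSq_plusC]
  have hcorr (j : ZMod n) : ∑ x, Complex.normSq (ψ x) *
      (if x j = x (j + (2 * R + 1) • 1) then 1 else -1) = 0 := by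
    have h := expectation_ZopC_mul_ZopC_eq_zero hU.2 hsym (fun j k hjk => (hrange j k hjk).2)
      (fun _ => lt_cyclicDist_add_of_cyclicDist_le hnR (j := j))
    rw [ZopC_mul_ZopC, star_dotProduct_diagonal_ofReal_mulVec, Complex.ofReal_eq_zero] at h
    rwa [nsmul_one]
  have henergy : star ψ ⬝ᵥ ringHam n *ᵥ ψ = ((∑ x, Complex.normSq (ψ x) *
      (Finset.univ.filter fun p : ZMod n => x p ≠ x (p + 1)).card : ℝ) : ℂ) := by
    rw [← star_dotProduct_diagonal_ofReal_mulVec, ringHam]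
    simp only [Complex.ofReal_natCast]
  rw [henergy, Complex.ofReal_im, Complex.ofReal_re]
  refine ⟨rfl, (sum_mul_card_ne_add_le _ (fun _ => Complex.normSq_nonneg _) hnorm 1
    (odd_two_mul_add_one R) hcorr).trans_eq ?_⟩
  rw [ZMod.card]
  push_cast
  ring
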